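/- arXiv:2306.16129 — 2 statements merged into one kernel-verified Lean document; each statement's English description precedes it below -/
import Mathlib

section
/- Let Σ be a finite alphabet and let R ⊆ Σ^n × Σ^n be a reflexive and symmetric binary relation. Let Π_R ⊆ Σ^{2n} be the set of concatenations u·v with (u,v) ∈ R, and let 𝒫_R be the set of probability mass functions on Σ^n whose support is contained in a set {u,v} with (u,v) ∈ R. For u, v ∈ Σ^n, let P_{u,v} be the PMF assigning probability 1/2 to each of u and v (probability 1 to u if u = v). Then d_EMD(P_{u,v}, 𝒫_R) = d(u·v, Π_R) = min_{(u*,v*)∈R} d(u·v, u*·v*), where d is the normalized Hamming distance (on Σ^{2n} for strings) and EMD is taken with respect to the normalized Hamming distance on Σ^n. -/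
open scoped BigOperators ENNReal

/-- Normalized Hamming distance between strings of length `n`: `|{i : x i ≠ y i}| / n`. -/
noncomputable def nhdist {n : ℕ} {α : Type*} [DecidableEq α] (x y : Fin n → α) : ℝ :=
  (hammingDist x y : ℝ) / n

/-- `T` is a coupling (transfer distribution) of `P` and `Q`:
its first marginal is `P` and its second marginal is `Q`. -/
def IsCoupling {α : Type*} (T : PMF (α × α)) (P Q : PMF α) : Prop :=
  T.map Prod.fst = P ∧ T.map Prod.snd = Q

/-- Expected cost `E_{(x,y)∼T}[d x y]` of a coupling on a finite type. -/
noncomputable def expCost {α : Type*} [Fintype α] (d : α → α → ℝ) (T : PMF (α × α)) : ℝ :=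
  ∑ z : α × α, (T z).toReal * d z.1 z.2

/-- Earth mover's distance between PMFs on a finite type, w.r.t. the cost function `d`:
the infimum over all couplings of the expected cost. -/
noncomputable def emd {α : Type*} [Fintype α] (d : α → α → ℝ) (P Q : PMF α) : ℝ :=
  sInf {r | ∃ T : PMF (α × α), IsCoupling T P Q ∧ r = expCost d T}

/-! ### Auxiliary lemmas -/

lemma nhdist_nonneg {n : ℕ} {α : Type*} [DecidableEq α] (x y : Fin n → α) : 0 ≤ nhdist x y :=
  div_nonneg (Nat.cast_nonneg _) (Nat.cast_nonneg _)

lemma hammingDist_append {n : ℕ} {α : Type*} [DecidableEq α] (u v p q : Fin n → α) :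
    hammingDist (Fin.append u v) (Fin.append p q) = hammingDist u p + hammingDist v q := by
  simp only [hammingDist, Finset.card_filter]
  rw [Fin.sum_univ_add]
  have h2 : ∀ x : Fin n, x.addNat n = Fin.natAdd n x := by
    intro x; ext; simp [Nat.add_comm]
  simp only [h2, Fin.append_left, Fin.append_right]

lemma nhdist_append {n : ℕ} {α : Type*} [DecidableEq α] (u v p q : Fin n → α) :
    nhdist (Fin.append u v) (Fin.append p q) = (nhdist u p + nhdist v q) / 2 := by
  rcases Nat.eq_zero_or_pos n with h | h
  · subst h
    have h1 : hammingDist u p = 0 := by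
      rw [hammingDist_eq_zero]; funext i; exact absurd i.2 (by omega)
    have h2 : hammingDist v q = 0 := by
      rw [hammingDist_eq_zero]; funext i; exact absurd i.2 (by omega)
    simp [nhdist, h1, h2, hammingDist_append]
  · have hn : (n : ℝ) ≠ 0 := Nat.cast_ne_zero.2 h.ne'
    simp only [nhdist, hammingDist_append]
    rw [div_add_div _ _ hn hn, div_div]
    push_cast
    rw [div_eq_div_iff (by positivity) (by positivity)]
    ring

lemma coupling_exists {α : Type*} (P Q : PMF α) : ∃ T : PMF (α × α), IsCoupling T P Q := by
  refine ⟨P.bind (fun x => Q.map (fun y => (x, y))), ?_, ?_⟩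
  · rw [PMF.map_bind]
    simp only [PMF.map_comp]
    have : ∀ x : α, ((fun p : α × α => p.1) ∘ fun y => (x, y)) = Function.const α x := by
      intro x; rfl
    simp only [this, PMF.map_const]
    exact PMF.bind_pure P
  · rw [PMF.map_bind]
    simp only [PMF.map_comp]
    have : ∀ x : α, ((fun p : α × α => p.2) ∘ fun y => (x, y)) = id := by intro x; rfl
    simp only [this, PMF.map_id, PMF.bind_const]

lemma expCost_nonneg {α : Type*} [Fintype α] {d : α → α → ℝ} (hd : ∀ x y, 0 ≤ d x y)
    (T : PMF (α × α)) : 0 ≤ expCost d T :=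
  Finset.sum_nonneg fun _ _ => mul_nonneg ENNReal.toReal_nonneg (hd _ _)

lemma emd_nonneg {α : Type*} [Fintype α] {d : α → α → ℝ} (hd : ∀ x y, 0 ≤ d x y)
    (P Q : PMF α) : 0 ≤ emd d P Q := by
  apply Real.sInf_nonneg
  rintro r ⟨T, -, rfl⟩
  exact expCost_nonneg hd T

lemma emd_le {α : Type*} [Fintype α] {d : α → α → ℝ} (hd : ∀ x y, 0 ≤ d x y)
    {P Q : PMF α} {T : PMF (α × α)} (hT : IsCoupling T P Q) : emd d P Q ≤ expCost d T := by
  apply csInf_le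
  · exact ⟨0, fun r ⟨T', _, hr⟩ => hr ▸ expCost_nonneg hd T'⟩
  · exact ⟨T, hT, rfl⟩

lemma le_emd {α : Type*} [Fintype α] {d : α → α → ℝ} {P Q : PMF α} {m : ℝ}
    (h : ∀ T : PMF (α × α), IsCoupling T P Q → m ≤ expCost d T) : m ≤ emd d P Q := by
  obtain ⟨T₀, hT₀⟩ := coupling_exists P Q
  have hmem : expCost d T₀ ∈ {r | ∃ T : PMF (α × α), IsCoupling T P Q ∧ r = expCost d T} :=
    ⟨T₀, hT₀, rfl⟩
  apply le_csInf ⟨_, hmem⟩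
  rintro r ⟨T, hT, rfl⟩
  exact h T hT

lemma marg_fst {α : Type*} [Fintype α] [DecidableEq α] (T : PMF (α × α)) (x : α) :
    (T.map Prod.fst) x = ∑ y, T (x, y) := by
  rw [PMF.map_apply, tsum_fintype, Fintype.sum_prod_type]
  trans (∑ a : α, if a = x then ∑ y, T (a, y) else 0)
  · apply Finset.sum_congr rfl
    intro a _
    by_cases hax : x = a
    · subst hax; simp
    · simp [hax, Ne.symm hax]
  · simp

lemma pair_sum_one {α : Type*} [Fintype α] [DecidableEq α] (u v p1 p2 : α) :
    ∑ z : α × α, ((if z = (u, p1) then (2⁻¹ : ℝ≥0∞) else 0)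
      + (if z = (v, p2) then (2⁻¹ : ℝ≥0∞) else 0)) = 1 := by
  rw [Finset.sum_add_distrib, Finset.sum_ite_eq' Finset.univ (u, p1) (fun _ => (2⁻¹ : ℝ≥0∞)),
    Finset.sum_ite_eq' Finset.univ (v, p2) (fun _ => (2⁻¹ : ℝ≥0∞))]
  simp [ENNReal.inv_two_add_inv_two]

/-- The coupling putting mass `1/2` on `(u, p1)` and mass `1/2` on `(v, p2)`. -/
noncomputable def Tpair {α : Type*} [Fintype α] [DecidableEq α] (u v p1 p2 : α) :
    PMF (α × α) :=
  PMF.ofFintype (fun z => (if z = (u, p1) then (2⁻¹ : ℝ≥0∞) else 0)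
      + (if z = (v, p2) then (2⁻¹ : ℝ≥0∞) else 0)) (pair_sum_one u v p1 p2)

lemma Tpair_fst {α : Type*} [Fintype α] [DecidableEq α] (u v p1 p2 : α) :
    (Tpair u v p1 p2).map Prod.fst
      = PMF.uniformOfFinset {u, v} (Finset.insert_nonempty u {v}) := by
  ext x
  rw [marg_fst]
  have hval : ∀ x y, Tpair u v p1 p2 (x, y) = (if (x, y) = (u, p1) then (2⁻¹ : ℝ≥0∞) else 0)
      + (if (x, y) = (v, p2) then (2⁻¹ : ℝ≥0∞) else 0) := fun _ _ => rfl
  simp only [hval]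
  rw [Finset.sum_add_distrib]
  have h1 : (∑ y, if (x, y) = (u, p1) then (2⁻¹ : ℝ≥0∞) else 0)
      = if x = u then (2⁻¹ : ℝ≥0∞) else 0 := by
    by_cases hx : x = u
    · subst hx
      simp [Prod.ext_iff, Finset.sum_ite_eq']
    · simp [Prod.ext_iff, hx]
  have h2 : (∑ y, if (x, y) = (v, p2) then (2⁻¹ : ℝ≥0∞) else 0)
      = if x = v then (2⁻¹ : ℝ≥0∞) else 0 := by
    by_cases hx : x = v
    · subst hx
      simp [Prod.ext_iff, Finset.sum_ite_eq']
    · simp [Prod.ext_iff, hx]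
  rw [h1, h2, PMF.uniformOfFinset_apply]
  by_cases huv : u = v
  · subst huv
    by_cases hx : x = u
    · subst hx; simp [ENNReal.inv_two_add_inv_two]
    · simp [hx]
  · by_cases hxu : x = u
    · subst hxu
      have hcard : ({x, v} : Finset α).card = 2 := by
        rw [Finset.card_insert_of_notMem (by simpa using huv)]; rfl
      simp [huv, hcard]
    · by_cases hxv : x = v
      · subst hxv
        have hcard : ({u, x} : Finset α).card = 2 := by
          rw [Finset.card_insert_of_notMem (by simpa using huv)]; rfl
        simp [hxu, hcard]
      · simp [hxu, hxv]

lemma Tpair_snd_support {α : Type*} [Fintype α] [DecidableEq α] (u v p1 p2 : α) :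
    ((Tpair u v p1 p2).map Prod.snd).support ⊆ {p1, p2} := by
  rw [PMF.support_map]
  rintro y ⟨z, hz, rfl⟩
  have hne : Tpair u v p1 p2 z ≠ 0 := hz
  by_cases h1 : z = (u, p1)
  · subst h1; exact Or.inl rfl
  · by_cases h2 : z = (v, p2)
    · subst h2; exact Or.inr rfl
    · exact absurd (by simp [Tpair, PMF.ofFintype_apply, h1, h2]) hne

lemma expCost_Tpair {α : Type*} [Fintype α] [DecidableEq α] (d : α → α → ℝ) (u v p1 p2 : α) :
    expCost d (Tpair u v p1 p2) = (d u p1 + d v p2) / 2 := by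
  unfold expCost
  have hval : ∀ z : α × α, ((Tpair u v p1 p2 z).toReal)
      = (if z = (u, p1) then (2⁻¹ : ℝ) else 0) + (if z = (v, p2) then (2⁻¹ : ℝ) else 0) := by
    intro z
    have : Tpair u v p1 p2 z = (if z = (u, p1) then (2⁻¹ : ℝ≥0∞) else 0)
      + (if z = (v, p2) then (2⁻¹ : ℝ≥0∞) else 0) := rfl
    rw [this, ENNReal.toReal_add (by split_ifs <;> simp) (by split_ifs <;> simp)]
    congr 1 <;> split_ifs <;> simp
  simp only [hval, add_mul, ite_mul, zero_mul]
  rw [Finset.sum_add_distrib, Finset.sum_ite_eq' Finset.univ (u, p1)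
      (fun z => (2⁻¹ : ℝ) * d z.1 z.2),
    Finset.sum_ite_eq' Finset.univ (v, p2) (fun z => (2⁻¹ : ℝ) * d z.1 z.2)]
  simp
  ring

lemma key_lower {α : Type*} [Fintype α] [DecidableEq α] (d : α → α → ℝ) (u v p1 p2 : α) (m : ℝ)
    (h11 : 2 * m ≤ d u p1 + d v p1) (h12 : 2 * m ≤ d u p1 + d v p2)
    (h21 : 2 * m ≤ d u p2 + d v p1) (h22 : 2 * m ≤ d u p2 + d v p2)
    (T : PMF (α × α)) (Q : PMF α)
    (hc : IsCoupling T (PMF.uniformOfFinset {u, v} (Finset.insert_nonempty u {v})) Q)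
    (hQ : Q.support ⊆ {p1, p2}) : m ≤ expCost d T := by
  set P := PMF.uniformOfFinset {u, v} (Finset.insert_nonempty u {v}) with hP
  have hsupp : ∀ z : α × α, T z ≠ 0 → (z.1 = u ∨ z.1 = v) ∧ (z.2 = p1 ∨ z.2 = p2) := by
    intro z hz
    have hz' : z ∈ T.support := hz
    constructor
    · have h1 : z.1 ∈ (T.map Prod.fst).support := by
        rw [PMF.support_map]; exact ⟨z, hz', rfl⟩
      rw [hc.1, hP, PMF.support_uniformOfFinset] at h1
      simpa using h1
    · have h2 : z.2 ∈ (T.map Prod.snd).support := by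
        rw [PMF.support_map]; exact ⟨z, hz', rfl⟩
      rw [hc.2] at h2
      exact hQ h2
  have row : ∀ x : α, ∑ y ∈ ({p1, p2} : Finset α), (T (x, y)).toReal = (P x).toReal := by
    intro x
    have h0 : ∑ y ∈ ({p1, p2} : Finset α), T (x, y) = ∑ y : α, T (x, y) := by
      apply Finset.sum_subset (Finset.subset_univ _)
      intro y _ hy
      by_contra hne
      have h2 : y = p1 ∨ y = p2 := (hsupp (x, y) hne).2
      rcases h2 with rfl | rfl <;> simp at hy
    rw [← hc.1, marg_fst, ← h0, ENNReal.toReal_sum]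
    intro y _
    exact PMF.apply_ne_top T (x, y)
  have hE : expCost d T
      = ∑ x ∈ ({u, v} : Finset α), ∑ y ∈ ({p1, p2} : Finset α), (T (x, y)).toReal * d x y := by
    rw [← Finset.sum_product']
    unfold expCost
    symm
    apply Finset.sum_subset (Finset.subset_univ _)
    intro z _ hz
    by_contra hne
    have hT : T z ≠ 0 := by
      intro h0
      exact hne (by simp [h0])
    obtain ⟨h1, h2⟩ := hsupp z hT
    apply hz
    rw [Finset.mem_product]
    constructor
    · rcases h1 with h | h <;> simp [h]
    · rcases h2 with h | h <;> simp [h]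
  by_cases huv : u = v
  · subst huv
    have hPu : (P u).toReal = 1 := by
      rw [hP, PMF.uniformOfFinset_apply, if_pos (Finset.mem_insert_self u {u})]
      simp
    have hmd1 : m ≤ d u p1 := by linarith
    have hmd2 : m ≤ d u p2 := by linarith
    have hE' : expCost d T = ∑ y ∈ ({p1, p2} : Finset α), (T (u, y)).toReal * d u y := by
      rw [hE]; simp
    rw [hE']
    calc m = (∑ y ∈ ({p1, p2} : Finset α), (T (u, y)).toReal) * m := by
            rw [row u, hPu, one_mul]
      _ = ∑ y ∈ ({p1, p2} : Finset α), (T (u, y)).toReal * m := by rw [Finset.sum_mul]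
      _ ≤ ∑ y ∈ ({p1, p2} : Finset α), (T (u, y)).toReal * d u y := by
            apply Finset.sum_le_sum
            intro y hy
            have : m ≤ d u y := by
              rcases Finset.mem_insert.1 hy with h | h
              · rw [h]; exact hmd1
              · rw [Finset.mem_singleton.1 h]; exact hmd2
            exact mul_le_mul_of_nonneg_left this ENNReal.toReal_nonneg
  · have hcard : ({u, v} : Finset α).card = 2 := by
      rw [Finset.card_insert_of_notMem (by simpa using huv)]; rfl
    have hPu : (P u).toReal = 1 / 2 := by
      rw [hP, PMF.uniformOfFinset_apply, if_pos (Finset.mem_insert_self u {v}), hcard]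
      simp
    have hPv : (P v).toReal = 1 / 2 := by
      rw [hP, PMF.uniformOfFinset_apply,
        if_pos (Finset.mem_insert.2 (Or.inr (Finset.mem_singleton_self v))), hcard]
      simp
    have hE' : expCost d T = (∑ y ∈ ({p1, p2} : Finset α), (T (u, y)).toReal * d u y)
        + ∑ y ∈ ({p1, p2} : Finset α), (T (v, y)).toReal * d v y := by
      rw [hE, Finset.sum_insert (by simpa using huv), Finset.sum_singleton]
    by_cases hp : p1 = p2
    · subst hp
      have hru : (T (u, p1)).toReal = 1 / 2 := by
        have := row u; rw [hPu] at this; simpa using this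
      have hrv : (T (v, p1)).toReal = 1 / 2 := by
        have := row v; rw [hPv] at this; simpa using this
      rw [hE']
      have hpp : ({p1, p1} : Finset α) = {p1} :=
        Finset.insert_eq_self.2 (Finset.mem_singleton_self p1)
      rw [hpp, Finset.sum_singleton, Finset.sum_singleton, hru, hrv]
      linarith
    · have hsum : ∀ x : α, ∑ y ∈ ({p1, p2} : Finset α), (T (x, y)).toReal * d x y
          = (T (x, p1)).toReal * d x p1 + (T (x, p2)).toReal * d x p2 := by
        intro x
        rw [Finset.sum_insert (by simpa using hp), Finset.sum_singleton]
      have hrow2 : ∀ x : α, ∑ y ∈ ({p1, p2} : Finset α), (T (x, y)).toReal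
          = (T (x, p1)).toReal + (T (x, p2)).toReal := by
        intro x
        rw [Finset.sum_insert (by simpa using hp), Finset.sum_singleton]
      rw [hE', hsum, hsum]
      set A := (T (u, p1)).toReal
      set B := (T (u, p2)).toReal
      set C := (T (v, p1)).toReal
      set D := (T (v, p2)).toReal
      have hA : 0 ≤ A := ENNReal.toReal_nonneg
      have hB : 0 ≤ B := ENNReal.toReal_nonneg
      have hC : 0 ≤ C := ENNReal.toReal_nonneg
      have hD : 0 ≤ D := ENNReal.toReal_nonneg
      have hru : A + B = 1 / 2 := by
        have := row u; rw [hPu, hrow2] at this; exact this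
      have hrv : C + D = 1 / 2 := by
        have := row v; rw [hPv, hrow2] at this; exact this
      have hB2 : B = 1 / 2 - A := by linarith
      have hD2 : D = 1 / 2 - C := by linarith
      rcases le_total A D with hAD | hDA
      · have e1 : 0 ≤ A * (d u p1 + d v p2 - 2 * m) := mul_nonneg hA (by linarith)
        have e2 : 0 ≤ C * (d u p2 + d v p1 - 2 * m) := mul_nonneg hC (by linarith)
        have e3 : 0 ≤ (1 / 2 - A - C) * (d u p2 + d v p2 - 2 * m) :=
          mul_nonneg (by linarith) (by linarith)
        have pB : B * d u p2 = (1 / 2 - A) * d u p2 := by rw [hB2]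
        have pD : D * d v p2 = (1 / 2 - C) * d v p2 := by rw [hD2]
        linarith [e1, e2, e3, pB, pD]
      · have hA' : A = 1 / 2 - B := by linarith
        have hC' : C = 1 / 2 - D := by linarith
        have e1 : 0 ≤ D * (d u p1 + d v p2 - 2 * m) := mul_nonneg hD (by linarith)
        have e2 : 0 ≤ B * (d u p2 + d v p1 - 2 * m) := mul_nonneg hB (by linarith)
        have e3 : 0 ≤ (1 / 2 - B - D) * (d u p1 + d v p1 - 2 * m) :=
          mul_nonneg (by linarith) (by linarith)
        have pA : A * d u p1 = (1 / 2 - B) * d u p1 := by rw [hA']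
        have pC : C * d v p1 = (1 / 2 - D) * d v p1 := by rw [hC']
        linarith [e1, e2, e3, pA, pC]

/-- For a reflexive symmetric relation `R ⊆ Σ^n × Σ^n`, the EMD distance of the two-point
distribution `P_{u,v}` (uniform on `{u,v}`) from the property `𝒫_R` (distributions supported
in some pair `{u*,v*}` with `(u*,v*) ∈ R`) equals the normalized Hamming distance of the
concatenated string `u·v` from `Π_R = {u*·v* : (u*,v*) ∈ R}`, which is the minimum of
`d(u·v, u*·v*)` over `(u*,v*) ∈ R`. -/
theorem two_split_distance (n : ℕ) (σ : Type*) [Fintype σ] [DecidableEq σ]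
    (R : Set ((Fin n → σ) × (Fin n → σ)))
    (hrefl : ∀ u, (u, u) ∈ R) (hsymm : ∀ u v, (u, v) ∈ R → (v, u) ∈ R)
    (u v : Fin n → σ) :
    sInf ((fun Q => emd nhdist (PMF.uniformOfFinset {u, v} (Finset.insert_nonempty u {v})) Q)
        '' {P : PMF (Fin n → σ) | ∃ p ∈ R, P.support ⊆ {p.1, p.2}})
      = sInf {r : ℝ | ∃ w ∈ {w : Fin (n + n) → σ | ∃ p ∈ R, w = Fin.append p.1 p.2},
          r = nhdist (Fin.append u v) w} ∧
    sInf {r : ℝ | ∃ w ∈ {w : Fin (n + n) → σ | ∃ p ∈ R, w = Fin.append p.1 p.2},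
          r = nhdist (Fin.append u v) w}
      = sInf {r : ℝ | ∃ p ∈ R, r = nhdist (Fin.append u v) (Fin.append p.1 p.2)} := by
  classical
  have hS23 : {r : ℝ | ∃ w ∈ {w : Fin (n + n) → σ | ∃ p ∈ R, w = Fin.append p.1 p.2},
          r = nhdist (Fin.append u v) w}
      = {r : ℝ | ∃ p ∈ R, r = nhdist (Fin.append u v) (Fin.append p.1 p.2)} := by
    ext r
    constructor
    · rintro ⟨w, ⟨p, hp, rfl⟩, rfl⟩
      exact ⟨p, hp, rfl⟩
    · rintro ⟨p, hp, rfl⟩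
      exact ⟨Fin.append p.1 p.2, ⟨p, hp, rfl⟩, rfl⟩
  refine ⟨?_, by rw [hS23]⟩
  rw [hS23]
  set P := PMF.uniformOfFinset {u, v} (Finset.insert_nonempty u {v}) with hPdef
  set S := {r : ℝ | ∃ p ∈ R, r = nhdist (Fin.append u v) (Fin.append p.1 p.2)} with hSdef
  set A := ((fun Q => emd nhdist P Q)
      '' {P' : PMF (Fin n → σ) | ∃ p ∈ R, P'.support ⊆ {p.1, p.2}}) with hAdef
  have hdnn : ∀ x y : Fin n → σ, 0 ≤ nhdist x y := fun x y => nhdist_nonneg x y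
  have hSne : S.Nonempty := ⟨_, (u, u), hrefl u, rfl⟩
  have hSbdd : BddBelow S := by
    refine ⟨0, ?_⟩
    rintro r ⟨p, hp, rfl⟩
    exact nhdist_nonneg _ _
  have hAbdd : BddBelow A := by
    refine ⟨0, ?_⟩
    rintro r ⟨Q, hQ, rfl⟩
    exact emd_nonneg hdnn _ _
  have hAne : A.Nonempty := by
    refine ⟨emd nhdist P (PMF.pure u), ⟨PMF.pure u, ⟨(u, u), hrefl u, ?_⟩, rfl⟩⟩
    rw [PMF.support_pure]
    intro x hx
    exact Or.inl hx
  apply le_antisymm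
  · apply le_csInf hSne
    rintro r ⟨p, hp, rfl⟩
    have hcoup : IsCoupling (Tpair u v p.1 p.2) P ((Tpair u v p.1 p.2).map Prod.snd) :=
      ⟨Tpair_fst u v p.1 p.2, rfl⟩
    have hmem : emd nhdist P ((Tpair u v p.1 p.2).map Prod.snd) ∈ A :=
      ⟨(Tpair u v p.1 p.2).map Prod.snd, ⟨p, hp, Tpair_snd_support u v p.1 p.2⟩, rfl⟩
    calc sInf A ≤ emd nhdist P ((Tpair u v p.1 p.2).map Prod.snd) := csInf_le hAbdd hmem
      _ ≤ expCost nhdist (Tpair u v p.1 p.2) := emd_le hdnn hcoup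
      _ = (nhdist u p.1 + nhdist v p.2) / 2 := expCost_Tpair nhdist u v p.1 p.2
      _ = nhdist (Fin.append u v) (Fin.append p.1 p.2) := (nhdist_append u v p.1 p.2).symm
  · apply le_csInf hAne
    rintro r ⟨Q, ⟨p, hp, hQsupp⟩, rfl⟩
    apply le_emd
    intro T hT
    have hm : ∀ q1 q2 : Fin n → σ, (q1, q2) ∈ R →
        sInf S ≤ (nhdist u q1 + nhdist v q2) / 2 := by
      intro q1 q2 hq
      have hmem : nhdist (Fin.append u v) (Fin.append q1 q2) ∈ S := ⟨(q1, q2), hq, rfl⟩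
      have := csInf_le hSbdd hmem
      rwa [nhdist_append] at this
    refine key_lower nhdist u v p.1 p.2 (sInf S) ?_ ?_ ?_ ?_ T Q hT hQsupp
    · have := hm p.1 p.1 (hrefl p.1); linarith
    · have := hm p.1 p.2 hp; linarith
    · have := hm p.2 p.1 (hsymm _ _ hp); linarith
    · have := hm p.2 p.2 (hrefl p.2); linarith
end

section
/- For every n, all functions f, g : [n] → [n], and every permutation h of [n], d(f∘g, id) ≤ d(f, h) + d(g, h⁻¹), where d is the normalized Hamming distance between functions and id is the identity function. -/
/-! Route through `f ∘ h⁻¹`: postcomposing with `f` does not increase the distance from `g` to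
`h⁻¹`, and reindexing by the bijection `h⁻¹` turns `d(f ∘ h⁻¹, id) = d(f ∘ h⁻¹, h ∘ h⁻¹)` into
`d(f, h)`. -/

theorem hammingDist_comp_equiv {ι ι' β : Type*} [Fintype ι] [Fintype ι'] [DecidableEq β]
    (σ : ι' ≃ ι) (x y : ι → β) : hammingDist (x ∘ σ) (y ∘ σ) = hammingDist x y :=
  Finset.card_equiv σ (by simp)

theorem hammingDist_comp_id_le {α : Type*} [Fintype α] [DecidableEq α] (f g : α → α)
    (h : Equiv.Perm α) : hammingDist (f ∘ g) id ≤ hammingDist f h + hammingDist g h.symm :=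
  calc hammingDist (f ∘ g) id
      ≤ hammingDist (f ∘ g) (f ∘ h.symm) + hammingDist (f ∘ h.symm) (h ∘ h.symm) := by
        simpa using hammingDist_triangle (f ∘ g) (f ∘ h.symm) id
    _ ≤ hammingDist g h.symm + hammingDist f h := by
        rw [hammingDist_comp_equiv]
        gcongr
        exact hammingDist_comp_le_hammingDist fun _ => f
    _ = hammingDist f h + hammingDist g h.symm := add_comm _ _

/-- For all functions `f, g : [n] → [n]` and every permutation `h` of `[n]`,
`d(f∘g, id) ≤ d(f, h) + d(g, h⁻¹)`. -/
theorem dist_comp_id_le (n : ℕ) (f g : Fin n → Fin n) (h : Equiv.Perm (Fin n)) :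
    nhdist (fun i => f (g i)) id ≤ nhdist f ⇑h + nhdist g ⇑h.symm := by
  unfold nhdist
  rw [← add_div]
  gcongr
  exact_mod_cast hammingDist_comp_id_le f g h
end
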